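/- For any α ∈ ℂ, the subspace of Ŝ'(2,α) spanned by ℒ_n^α, H_n, 𝔥_n^α, 𝔭_n (n ∈ ℤ) and 𝒸 is a Lie sub-superalgebra, and the linear map φ defined by φ(ℒ_n^α) = ℒ_n − (α/2)H_n + (α²/24)δ_{n,0}𝒸, φ(H_n) = H_n − (α/6)δ_{n,0}𝒸, φ(𝔥_n^α) = (1/√2)G^+_{n−1/2}, φ(𝔭_n) = (1/√2)G^−_{n+1/2}, φ(𝒸) = 𝒸 is an isomorphism of Lie superalgebras from this subalgebra onto the N = 2 superconformal algebra (the spectral flow transformation). -/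

import Mathlib

noncomputable section

/-- Kronecker delta `δ_{n,0}` with values in `ℂ`. -/
def deltaZ (n : ℤ) : ℂ := if n = 0 then 1 else 0

/-- Basis symbols of the subalgebra of `Ŝ'(2,α)` spanned by `ℒ_n^α, H_n, 𝔥_n^α, 𝔭_n`
and the central element `𝒸`. -/
inductive BSub : Type
  | l (n : ℤ) | h (n : ℤ) | g (n : ℤ) | q (n : ℤ) | cen
deriving DecidableEq

/-- Basis symbols of the `N = 2` superconformal algebra: `ℒ_n`, `H_n`,
`gp n = G⁺_{n−1/2}`, `gm n = G⁻_{n+1/2}` and the central element `𝒸`. -/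
inductive BN2 : Type
  | l (n : ℤ) | h (n : ℤ) | gp (n : ℤ) | gm (n : ℤ) | cen
deriving DecidableEq

open BSub in
/-- Structure constants of the subalgebra `⟨ℒ_n^α, H_n, 𝔥_n^α, 𝔭_n, 𝒸⟩` of `Ŝ'(2,α)`
(relations (4.8) together with the cocycle (4.9); odd-odd brackets are symmetric,
`𝒸` is central). -/
def brSub (α : ℂ) : BSub → BSub → (BSub →₀ ℂ)
  | l n, l k => ((n : ℂ) - k) • Finsupp.single (l (n + k)) 1
      + ((1 / 12 : ℂ) * n * ((n : ℂ) ^ 2 - 1) * deltaZ (n + k)) • Finsupp.single cen 1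
  | l n, h k => (-(k : ℂ)) • Finsupp.single (h (n + k)) 1
  | h n, l k => (n : ℂ) • Finsupp.single (h (n + k)) 1
  | l n, g k => (((n : ℂ) - 2 * k + 1 - α) / 2) • Finsupp.single (g (n + k)) 1
  | g n, l k => (-(((k : ℂ) - 2 * n + 1 - α) / 2)) • Finsupp.single (g (n + k)) 1
  | l n, q k => (((n : ℂ) - 2 * k - 1 + α) / 2) • Finsupp.single (q (n + k)) 1
  | q n, l k => (-(((k : ℂ) - 2 * n - 1 + α) / 2)) • Finsupp.single (q (n + k)) 1
  | h n, h k => ((1 / 3 : ℂ) * n * deltaZ (n + k)) • Finsupp.single cen 1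
  | h n, g k => Finsupp.single (g (n + k)) 1
  | g n, h k => -Finsupp.single (g (n + k)) 1
  | h n, q k => -Finsupp.single (q (n + k)) 1
  | q n, h k => Finsupp.single (q (n + k)) 1
  | g n, q k => Finsupp.single (l (n + k)) 1
      - (((k : ℂ) - n + 1 - α) / 2) • Finsupp.single (h (n + k)) 1
      + ((1 / 6 : ℂ) * (((n : ℂ) - 1 + (α + 1) / 2) ^ 2 - 1 / 4) * deltaZ (n + k)) •
          Finsupp.single cen 1
  | q n, g k => Finsupp.single (l (n + k)) 1
      - (((n : ℂ) - k + 1 - α) / 2) • Finsupp.single (h (n + k)) 1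
      + ((1 / 6 : ℂ) * (((k : ℂ) - 1 + (α + 1) / 2) ^ 2 - 1 / 4) * deltaZ (n + k)) •
          Finsupp.single cen 1
  | _, _ => 0

open BN2 in
/-- Structure constants of the `N = 2` superconformal algebra (3.1), with
`gp n = G⁺_{n−1/2}` and `gm n = G⁻_{n+1/2}`. -/
def brN2 : BN2 → BN2 → (BN2 →₀ ℂ)
  | l n, l k => ((n : ℂ) - k) • Finsupp.single (l (n + k)) 1
      + ((1 / 12 : ℂ) * ((n : ℂ) ^ 3 - n) * deltaZ (n + k)) • Finsupp.single cen 1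
  | l n, h k => (-(k : ℂ)) • Finsupp.single (h (n + k)) 1
  | h n, l k => (n : ℂ) • Finsupp.single (h (n + k)) 1
  | l n, gp k => ((n : ℂ) / 2 - k + 1 / 2) • Finsupp.single (gp (n + k)) 1
  | gp n, l k => (-((k : ℂ) / 2 - n + 1 / 2)) • Finsupp.single (gp (n + k)) 1
  | l n, gm k => ((n : ℂ) / 2 - k - 1 / 2) • Finsupp.single (gm (n + k)) 1
  | gm n, l k => (-((k : ℂ) / 2 - n - 1 / 2)) • Finsupp.single (gm (n + k)) 1
  | h n, h k => ((1 / 3 : ℂ) * n * deltaZ (n + k)) • Finsupp.single cen 1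
  | h n, gp k => Finsupp.single (gp (n + k)) 1
  | gp n, h k => -Finsupp.single (gp (n + k)) 1
  | h n, gm k => -Finsupp.single (gm (n + k)) 1
  | gm n, h k => Finsupp.single (gm (n + k)) 1
  | gp n, gm k => (2 : ℂ) • Finsupp.single (l (n + k)) 1
      + ((n : ℂ) - k - 1) • Finsupp.single (h (n + k)) 1
      + ((1 / 3 : ℂ) * ((n : ℂ) ^ 2 - n) * deltaZ (n + k)) • Finsupp.single cen 1
  | gm n, gp k => (2 : ℂ) • Finsupp.single (l (n + k)) 1
      + ((k : ℂ) - n - 1) • Finsupp.single (h (n + k)) 1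
      + ((1 / 3 : ℂ) * ((k : ℂ) ^ 2 - k) * deltaZ (n + k)) • Finsupp.single cen 1
  | _, _ => 0

/-- The bracket of the subalgebra of `Ŝ'(2,α)`, extended bilinearly. -/
def BrSub (α : ℂ) (x y : BSub →₀ ℂ) : BSub →₀ ℂ :=
  x.sum fun b cb => y.sum fun b' cb' => (cb * cb') • brSub α b b'

/-- The bracket of the `N = 2` superconformal algebra, extended bilinearly. -/
def BrN2 (x y : BN2 →₀ ℂ) : BN2 →₀ ℂ :=
  x.sum fun b cb => y.sum fun b' cb' => (cb * cb') • brN2 b b'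

open BSub in
/-- The spectral flow map `φ` on the basis:
`φ(ℒ_n^α) = ℒ_n − (α/2)H_n + (α²/24)δ_{n,0}𝒸`, `φ(H_n) = H_n − (α/6)δ_{n,0}𝒸`,
`φ(𝔥_n^α) = (1/√2)G⁺_{n−1/2}`, `φ(𝔭_n) = (1/√2)G⁻_{n+1/2}`, `φ(𝒸) = 𝒸`. -/
def phi0 (α : ℂ) : BSub → (BN2 →₀ ℂ)
  | l n => Finsupp.single (BN2.l n) 1 - (α / 2) • Finsupp.single (BN2.h n) 1
      + (α ^ 2 / 24 * deltaZ n) • Finsupp.single BN2.cen 1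
  | h n => Finsupp.single (BN2.h n) 1 - (α / 6 * deltaZ n) • Finsupp.single BN2.cen 1
  | g n => ((Real.sqrt 2 : ℂ))⁻¹ • Finsupp.single (BN2.gp n) 1
  | q n => ((Real.sqrt 2 : ℂ))⁻¹ • Finsupp.single (BN2.gm n) 1
  | cen => Finsupp.single BN2.cen 1

/-- The linear extension of `φ`. -/
def Phi (α : ℂ) (x : BSub →₀ ℂ) : BN2 →₀ ℂ := x.sum fun b c => c • phi0 α b

/-! Both brackets and `φ` are the (bi)linear extensions of their values on basis symbols, so `φ` is a
bracket homomorphism as soon as it is one on each of the 25 pairs of basis symbols, where it is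
a finite identity between combinations of at most three basis vectors. The cocycle of
`Ŝ'(2,α)` is exactly what makes the central terms match after the shift by `α`. On basis
symbols `φ` is triangular (`ℒ ↦ ℒ + ⟨H, 𝒸⟩`, `H ↦ H + ⟨𝒸⟩`) up to the factor `1/√2` on odd
symbols, so it has an inverse of the same shape. -/

open Finsupp

namespace Finsupp

section StructureConstants

variable (R : Type*) {X Y Z : Type*} [CommSemiring R]

def linearCombination₂ (br : X → Y → (Z →₀ R)) : (X →₀ R) →ₗ[R] (Y →₀ R) →ₗ[R] (Z →₀ R) :=
  linearCombination R fun a => linearCombination R (br a)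

variable {R}

theorem linearCombination₂_apply (br : X → Y → (Z →₀ R)) (x : X →₀ R) (y : Y →₀ R) :
    linearCombination₂ R br x y = x.sum fun a c => y.sum fun b d => (c * d) • br a b := by
  simp only [linearCombination₂, linearCombination_apply, LinearMap.finsupp_sum_apply,
    LinearMap.smul_apply, smul_sum, mul_smul]

@[simp]
theorem linearCombination₂_single_single (br : X → Y → (Z →₀ R)) (a : X) (b : Y) (c d : R) :
    linearCombination₂ R br (single a c) (single b d) = (c * d) • br a b := by
  simp [linearCombination₂, mul_smul]

theorem linearCombination_linearCombination₂ {br₁ : X → X → (X →₀ R)} {br₂ : Y → Y → (Y →₀ R)}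
    {φ : X → (Y →₀ R)}
    (h : ∀ a b, linearCombination R φ (br₁ a b) = linearCombination₂ R br₂ (φ a) (φ b))
    (x y : X →₀ R) :
    linearCombination R φ (linearCombination₂ R br₁ x y) =
      linearCombination₂ R br₂ (linearCombination R φ x) (linearCombination R φ y) := by
  suffices (linearCombination₂ R br₁).compr₂ (linearCombination R φ) =
      (linearCombination₂ R br₂).compl₁₂ (linearCombination R φ) (linearCombination R φ) from
    LinearMap.congr_fun₂ this x y
  ext a b
  simp [h]

theorem linearCombination_bijective_of_inverse_on_basis {φ : X → (Y →₀ R)} {ψ : Y → (X →₀ R)}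
    (hψφ : ∀ a, linearCombination R ψ (φ a) = single a 1)
    (hφψ : ∀ b, linearCombination R φ (ψ b) = single b 1) :
    Function.Bijective (linearCombination R φ) := by
  have hleft : linearCombination R ψ ∘ₗ linearCombination R φ = LinearMap.id := by
    ext a
    simp [hψφ]
  have hright : linearCombination R φ ∘ₗ linearCombination R ψ = LinearMap.id := by
    ext b
    simp [hφψ]
  exact Function.bijective_iff_has_inverse.mpr
    ⟨linearCombination R ψ, LinearMap.congr_fun hleft, LinearMap.congr_fun hright⟩

end StructureConstants

end Finsupp

theorem Phi_eq_linearCombination (α : ℂ) : Phi α = linearCombination ℂ (phi0 α) :=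
  funext fun x => (linearCombination_apply ℂ x).symm

theorem BrSub_eq_linearCombination₂ (α : ℂ) (x y : BSub →₀ ℂ) :
    BrSub α x y = linearCombination₂ ℂ (brSub α) x y :=
  (linearCombination₂_apply _ x y).symm

theorem BrN2_eq_linearCombination₂ (x y : BN2 →₀ ℂ) :
    BrN2 x y = linearCombination₂ ℂ brN2 x y :=
  (linearCombination₂_apply _ x y).symm

theorem ofReal_sqrt_two_ne_zero : (Real.sqrt 2 : ℂ) ≠ 0 := by
  exact_mod_cast (Real.sqrt_pos.mpr zero_lt_two).ne'

theorem inv_ofReal_sqrt_two_mul_self : (Real.sqrt 2 : ℂ)⁻¹ * (Real.sqrt 2 : ℂ)⁻¹ = 1 / 2 := by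
  rw [← mul_inv, ← Complex.ofReal_mul, Real.mul_self_sqrt zero_le_two]
  norm_num

theorem linearCombination_phi0_brSub (α : ℂ) (a b : BSub) :
    linearCombination ℂ (phi0 α) (brSub α a b) =
      linearCombination₂ ℂ brN2 (phi0 α a) (phi0 α b) := by
  cases a <;> cases b <;>
    simp only [brSub, phi0, brN2, map_add, map_sub, map_neg, map_smul, map_zero,
      linearCombination_single, LinearMap.add_apply, LinearMap.sub_apply, LinearMap.smul_apply,
      linearCombination₂_single_single, smul_add, smul_sub, smul_smul, ← mul_assoc,
      one_smul, mul_one, one_mul, smul_zero, inv_ofReal_sqrt_two_mul_self]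
  -- the central terms of the two sides agree only on the support `n + k = 0` of `δ`
  all_goals first
    | module
    | rename_i n k
      rcases eq_or_ne (n + k) 0 with hnk | hnk
      · obtain rfl : k = -n := by omega
        simp only [deltaZ, add_neg_cancel]
        module
      · simp only [deltaZ, if_neg hnk]
        module

open BN2 in
def phi0Inv (α : ℂ) : BN2 → (BSub →₀ ℂ)
  | l n => single (BSub.l n) 1 + (α / 2) • single (BSub.h n) 1
      + (α ^ 2 / 24 * deltaZ n) • single BSub.cen 1
  | h n => single (BSub.h n) 1 + (α / 6 * deltaZ n) • single BSub.cen 1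
  | gp n => (Real.sqrt 2 : ℂ) • single (BSub.g n) 1
  | gm n => (Real.sqrt 2 : ℂ) • single (BSub.q n) 1
  | cen => single BSub.cen 1

theorem linearCombination_phi0Inv_phi0 (α : ℂ) (a : BSub) :
    linearCombination ℂ (phi0Inv α) (phi0 α a) = single a 1 := by
  cases a <;>
    simp only [phi0, phi0Inv, map_add, map_sub, map_smul, linearCombination_single, smul_add,
      smul_smul, one_smul, one_mul, inv_mul_cancel₀ ofReal_sqrt_two_ne_zero] <;>
    module

theorem linearCombination_phi0_phi0Inv (α : ℂ) (b : BN2) :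
    linearCombination ℂ (phi0 α) (phi0Inv α b) = single b 1 := by
  cases b <;>
    simp only [phi0, phi0Inv, map_add, map_smul, linearCombination_single, smul_add, smul_sub,
      smul_smul, one_smul, one_mul, mul_inv_cancel₀ ofReal_sqrt_two_ne_zero] <;>
    module

/-- For any `α ∈ ℂ`, the subspace of `Ŝ'(2,α)` spanned by
`ℒ_n^α, H_n, 𝔥_n^α, 𝔭_n` (`n ∈ ℤ`) and `𝒸` is a Lie sub-superalgebra, and the
spectral flow map `φ` is an isomorphism of Lie superalgebras from it onto the
`N = 2` superconformal algebra. -/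
theorem spectral_flow_iso (α : ℂ) :
    Function.Bijective (Phi α) ∧
    ∀ x y : BSub →₀ ℂ, Phi α (BrSub α x y) = BrN2 (Phi α x) (Phi α y) := by
  simp only [Phi_eq_linearCombination, BrSub_eq_linearCombination₂, BrN2_eq_linearCombination₂]
  exact ⟨linearCombination_bijective_of_inverse_on_basis (linearCombination_phi0Inv_phi0 α)
      (linearCombination_phi0_phi0Inv α),
    linearCombination_linearCombination₂ (linearCombination_phi0_brSub α)⟩
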